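/- Let d ≥ 1, γ ≥ 0, n ≥ 1. Let a : ℕ^n → ℂ with a(0) = 0, F_M(r) = ∑_{k∈ℕ^n} |a_k| r^{|k|} (|k| = k₁ + ⋯ + k_n), R_M = sup{r ≥ 0 : F_M(r) < ∞}, and F_M′(r) = ∑_{k∈ℕ^n} |a_k| |k| r^{|k|−1}. Let 0 ≤ R < R_M and let w₁, …, w_n and v₁, …, v_n be measurable functions ℝ^d → ℂ with ‖w_i‖_γ ≤ R and ‖v_i‖_γ ≤ R for each i. Then ∑_{k∈ℕ^n, k≠0} |a_k| · ‖(w₁^{*k₁} * ⋯ * w_n^{*k_n}) − (v₁^{*k₁} * ⋯ * v_n^{*k_n})‖_γ ≤ F_M′(R) · max_{1≤i≤n} ‖w_i − v_i‖_γ, where F_M′(R) < ∞. -/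

import Mathlib

open MeasureTheory
open scoped ENNReal

/-- The exponentially weighted `L¹` (Gevrey) norm `‖w‖_γ = ∫ e^{γ‖ξ‖} |w(ξ)| dξ`. -/
noncomputable def gnorm (d : ℕ) (γ : ℝ) (w : EuclideanSpace ℝ (Fin d) → ℂ) : ℝ≥0∞ :=
  ∫⁻ ξ, ENNReal.ofReal (Real.exp (γ * ‖ξ‖)) * (‖w ξ‖₊ : ℝ≥0∞)

/-- Convolution on `ℝ^d`. -/
noncomputable def convE (d : ℕ) (u v : EuclideanSpace ℝ (Fin d) → ℂ) :
    EuclideanSpace ℝ (Fin d) → ℂ :=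
  fun ξ => ∫ η, u (ξ - η) * v η

/-- Convolution of a (nonempty) list of functions; the empty convolution is set to `0`. -/
noncomputable def convList (d : ℕ) :
    List (EuclideanSpace ℝ (Fin d) → ℂ) → EuclideanSpace ℝ (Fin d) → ℂ
  | [] => fun _ => 0
  | [f] => f
  | f :: g :: rest => convE d f (convList d (g :: rest))

/-- `multiConv d n w k` is the convolution `w₁^{*k₁} * ⋯ * w_n^{*k_n}` of `k₁` copies of
`w₁`, …, `k_n` copies of `w_n`. -/
noncomputable def multiConv (d n : ℕ) (w : Fin n → EuclideanSpace ℝ (Fin d) → ℂ)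
    (k : Fin n → ℕ) : EuclideanSpace ℝ (Fin d) → ℂ :=
  convList d ((List.ofFn fun i => List.replicate (k i) (w i)).flatten)

/-- The majorizing function `F_M(r) = ∑_k |a_k| r^{|k|}`, `|k| = k₁ + ⋯ + k_n`. -/
noncomputable def FM (n : ℕ) (a : (Fin n → ℕ) → ℂ) (r : ℝ) : ℝ≥0∞ :=
  ∑' k : Fin n → ℕ, ENNReal.ofReal ‖a k‖ * ENNReal.ofReal r ^ (∑ i, k i)

/-- The radius `R_M = sup {r ≥ 0 : F_M(r) < ∞}`. -/
noncomputable def RM (n : ℕ) (a : (Fin n → ℕ) → ℂ) : ℝ≥0∞ :=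
  ⨆ r : {r : ℝ // 0 ≤ r ∧ FM n a r < ⊤}, ENNReal.ofReal r.1

/-- The derived majorizing function `F_M′(r) = ∑_k |a_k| |k| r^{|k|−1}`. -/
noncomputable def FM' (n : ℕ) (a : (Fin n → ℕ) → ℂ) (r : ℝ) : ℝ≥0∞ :=
  ∑' k : Fin n → ℕ, ENNReal.ofReal ‖a k‖ * (∑ i, k i : ℕ) *
    ENNReal.ofReal r ^ ((∑ i, k i) - 1)


/-!
The weight `e^{γ‖ξ‖}` is submultiplicative, so `‖·‖_γ` is submultiplicative under convolution
(a weighted Young inequality). The telescoping identity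
`w₁ * ⋯ * w_m − v₁ * ⋯ * v_m = (w₁ − v₁) * (w₂ * ⋯ * w_m) + v₁ * (w₂ * ⋯ * w_m − v₂ * ⋯ * v_m)`
then bounds the `k`-th term by `|a_k| |k| R^{|k|−1} max_i ‖w_i − v_i‖_γ`, and summing gives
`F_M′(R)`. Finiteness: for `R < r < R_M`, Bernoulli's inequality `|k| R^{|k|−1} (r − R) ≤ r^{|k|}`
yields `F_M′(R) (r − R) ≤ F_M(r) < ∞`.
-/

theorem ofReal_exp_mul_norm_add_le {E : Type*} [SeminormedAddGroup E] {γ : ℝ} (hγ : 0 ≤ γ)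
    (x y : E) :
    ENNReal.ofReal (Real.exp (γ * ‖x + y‖)) ≤
      ENNReal.ofReal (Real.exp (γ * ‖x‖)) * ENNReal.ofReal (Real.exp (γ * ‖y‖)) := by
  rw [← ENNReal.ofReal_mul (Real.exp_nonneg _), ← Real.exp_add, ← mul_add]
  gcongr
  exact norm_add_le x y

theorem lintegral_lintegral_comp_sub_mul {G : Type*} [MeasurableSpace G] [AddGroup G]
    [MeasurableAdd₂ G] [MeasurableNeg G] {μ : Measure G} [SFinite μ] [μ.IsAddRightInvariant]
    {F H : G → ℝ≥0∞} (hF : Measurable F) (hH : Measurable H) :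
    ∫⁻ x, ∫⁻ y, F (x - y) * H y ∂μ ∂μ = (∫⁻ x, F x ∂μ) * ∫⁻ y, H y ∂μ := by
  rw [lintegral_lintegral_swap (by fun_prop), ← lintegral_const_mul'' _ hH.aemeasurable]
  refine lintegral_congr fun y => ?_
  rw [lintegral_mul_const'' _ (by fun_prop), lintegral_sub_right_eq_self F y]

section GevreyNorm

variable {d : ℕ} {γ : ℝ}

theorem measurable_convE {u v : EuclideanSpace ℝ (Fin d) → ℂ} (hu : Measurable u)
    (hv : Measurable v) : Measurable (convE d u v) :=
  (((hu.comp (measurable_fst.sub measurable_snd)).mul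
    (hv.comp measurable_snd)).stronglyMeasurable.integral_prod_right').measurable

theorem measurable_convList :
    ∀ l : List (EuclideanSpace ℝ (Fin d) → ℂ), (∀ f ∈ l, Measurable f) →
      Measurable (convList d l)
  | [], _ => measurable_const
  | [f], h => h f List.mem_cons_self
  | f :: g :: rest, h => measurable_convE (h f List.mem_cons_self)
      (measurable_convList (g :: rest) fun x hx => h x (List.mem_cons_of_mem f hx))

theorem gnorm_congr_ae {u v : EuclideanSpace ℝ (Fin d) → ℂ} (h : u =ᵐ[volume] v) :
    gnorm d γ u = gnorm d γ v :=
  lintegral_congr_ae <| h.mono fun ξ hξ => by simp only [hξ]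

theorem gnorm_add_le {u v : EuclideanSpace ℝ (Fin d) → ℂ} (hu : Measurable u) :
    gnorm d γ (fun ξ => u ξ + v ξ) ≤ gnorm d γ u + gnorm d γ v := by
  rw [gnorm, gnorm, gnorm, ← lintegral_add_left (by fun_prop)]
  refine lintegral_mono fun ξ => ?_
  rw [← mul_add]
  gcongr
  exact ENNReal.coe_le_coe.2 (nnnorm_add_le (u ξ) (v ξ))

theorem lintegral_enorm_le_gnorm (hγ : 0 ≤ γ) (u : EuclideanSpace ℝ (Fin d) → ℂ) :
    ∫⁻ ξ, ‖u ξ‖ₑ ≤ gnorm d γ u := by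
  refine lintegral_mono fun ξ => le_mul_of_one_le_left' ?_
  rw [← ENNReal.ofReal_one]
  exact ENNReal.ofReal_le_ofReal (Real.one_le_exp (by positivity))

theorem integrable_of_gnorm_ne_top (hγ : 0 ≤ γ) {u : EuclideanSpace ℝ (Fin d) → ℂ}
    (hu : Measurable u) (h : gnorm d γ u ≠ ⊤) : Integrable u :=
  ⟨hu.aestronglyMeasurable, (lintegral_enorm_le_gnorm hγ u).trans_lt h.lt_top⟩

theorem gnorm_convE_le (hγ : 0 ≤ γ) {u v : EuclideanSpace ℝ (Fin d) → ℂ}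
    (hu : Measurable u) (hv : Measurable v) :
    gnorm d γ (convE d u v) ≤ gnorm d γ u * gnorm d γ v := by
  set W : EuclideanSpace ℝ (Fin d) → ℝ≥0∞ := fun ξ => ENNReal.ofReal (Real.exp (γ * ‖ξ‖))
  calc gnorm d γ (convE d u v)
      ≤ ∫⁻ ξ, ∫⁻ η, (W (ξ - η) * ‖u (ξ - η)‖ₑ) * (W η * ‖v η‖ₑ) := by
        refine lintegral_mono fun ξ => ?_
        calc W ξ * ‖convE d u v ξ‖ₑ ≤ W ξ * ∫⁻ η, ‖u (ξ - η)‖ₑ * ‖v η‖ₑ := by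
              gcongr
              exact (enorm_integral_le_lintegral_enorm _).trans_eq (by simp only [enorm_mul])
          _ = ∫⁻ η, W ξ * (‖u (ξ - η)‖ₑ * ‖v η‖ₑ) :=
              (lintegral_const_mul' _ _ ENNReal.ofReal_ne_top).symm
          _ ≤ _ := lintegral_mono fun η => by
              calc W ξ * (‖u (ξ - η)‖ₑ * ‖v η‖ₑ)
                  ≤ (W (ξ - η) * W η) * (‖u (ξ - η)‖ₑ * ‖v η‖ₑ) := by
                    gcongr
                    simpa only [sub_add_cancel] using ofReal_exp_mul_norm_add_le hγ (ξ - η) η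
                _ = _ := by ring
    _ = gnorm d γ u * gnorm d γ v :=
        lintegral_lintegral_comp_sub_mul (F := fun ξ => W ξ * ‖u ξ‖ₑ)
          (H := fun ξ => W ξ * ‖v ξ‖ₑ) (by fun_prop) (by fun_prop)

theorem gnorm_convList_le (hγ : 0 ≤ γ) (x : ℝ≥0∞) :
    ∀ l : List (EuclideanSpace ℝ (Fin d) → ℂ), (∀ f ∈ l, Measurable f) →
      (∀ f ∈ l, gnorm d γ f ≤ x) → gnorm d γ (convList d l) ≤ x ^ l.length
  | [], _, _ => by simp [convList, gnorm]
  | [f], _, hx => by simpa [convList] using hx f List.mem_cons_self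
  | f :: g :: rest, hm, hx => by
      have hm' : ∀ f' ∈ g :: rest, Measurable f' :=
        fun f' hf' => hm f' (List.mem_cons_of_mem f hf')
      have hx' : ∀ f' ∈ g :: rest, gnorm d γ f' ≤ x :=
        fun f' hf' => hx f' (List.mem_cons_of_mem f hf')
      calc gnorm d γ (convE d f (convList d (g :: rest)))
          ≤ gnorm d γ f * gnorm d γ (convList d (g :: rest)) :=
            gnorm_convE_le hγ (hm f List.mem_cons_self) (measurable_convList _ hm')
        _ ≤ x * x ^ (g :: rest).length :=
            mul_le_mul' (hx f List.mem_cons_self) (gnorm_convList_le hγ x _ hm' hx')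
        _ = x ^ (f :: g :: rest).length := (pow_succ' x _).symm

theorem ae_integrable_convE_integrand {u v : EuclideanSpace ℝ (Fin d) → ℂ}
    (hu : Integrable u) (hv : Integrable v) :
    ∀ᵐ ξ, Integrable fun η => u (ξ - η) * v η :=
  (hv.ae_convolution_exists (ContinuousLinearMap.mul ℂ ℂ) hu).mono fun ξ h => by
    simpa only [ConvolutionExistsAt, ContinuousLinearMap.mul_apply', mul_comm] using h

/-- Only almost everywhere: `convE` is a Bochner integral, which is `0` at the points where the
integrand is not integrable. -/
theorem convE_sub_convE_ae_eq {u u' v v' : EuclideanSpace ℝ (Fin d) → ℂ}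
    (hu : Integrable u) (hu' : Integrable u') (hv : Integrable v) (hv' : Integrable v') :
    (fun ξ => convE d u v ξ - convE d u' v' ξ) =ᵐ[volume]
      fun ξ => convE d (fun x => u x - u' x) v ξ + convE d u' (fun x => v x - v' x) ξ := by
  filter_upwards [ae_integrable_convE_integrand hu hv, ae_integrable_convE_integrand hu' hv,
    ae_integrable_convE_integrand hu' hv'] with ξ huv hu'v hu'v'
  have h₁ : convE d (fun x => u x - u' x) v ξ = convE d u v ξ - convE d u' v ξ := by
    simp only [convE, ← integral_sub huv hu'v, sub_mul]
  have h₂ : convE d u' (fun x => v x - v' x) ξ = convE d u' v ξ - convE d u' v' ξ := by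
    simp only [convE, ← integral_sub hu'v hu'v', mul_sub]
  rw [h₁, h₂]
  ring

theorem gnorm_convE_sub_convE_le (hγ : 0 ≤ γ) {u u' v v' : EuclideanSpace ℝ (Fin d) → ℂ}
    (hu : Measurable u) (hu' : Measurable u') (hv : Measurable v) (hv' : Measurable v')
    (hu_fin : gnorm d γ u ≠ ⊤) (hu'_fin : gnorm d γ u' ≠ ⊤) (hv_fin : gnorm d γ v ≠ ⊤)
    (hv'_fin : gnorm d γ v' ≠ ⊤) :
    gnorm d γ (fun ξ => convE d u v ξ - convE d u' v' ξ) ≤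
      gnorm d γ (fun ξ => u ξ - u' ξ) * gnorm d γ v +
        gnorm d γ u' * gnorm d γ (fun ξ => v ξ - v' ξ) :=
  calc gnorm d γ (fun ξ => convE d u v ξ - convE d u' v' ξ)
      = gnorm d γ (fun ξ => convE d (fun ξ => u ξ - u' ξ) v ξ +
          convE d u' (fun ξ => v ξ - v' ξ) ξ) :=
        gnorm_congr_ae <| convE_sub_convE_ae_eq (integrable_of_gnorm_ne_top hγ hu hu_fin)
          (integrable_of_gnorm_ne_top hγ hu' hu'_fin) (integrable_of_gnorm_ne_top hγ hv hv_fin)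
          (integrable_of_gnorm_ne_top hγ hv' hv'_fin)
    _ ≤ gnorm d γ (convE d (fun ξ => u ξ - u' ξ) v) +
          gnorm d γ (convE d u' (fun ξ => v ξ - v' ξ)) :=
        gnorm_add_le (measurable_convE (hu.sub hu') hv)
    _ ≤ _ := add_le_add (gnorm_convE_le hγ (hu.sub hu') hv) (gnorm_convE_le hγ hu' (hv.sub hv'))

theorem gnorm_convList_map_sub_le (hγ : 0 ≤ γ) {ι : Type*}
    {w v : ι → EuclideanSpace ℝ (Fin d) → ℂ} (hw : ∀ i, Measurable (w i))
    (hv : ∀ i, Measurable (v i)) {x D : ℝ≥0∞} (hx : x ≠ ⊤) (hwx : ∀ i, gnorm d γ (w i) ≤ x)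
    (hvx : ∀ i, gnorm d γ (v i) ≤ x) (hD : ∀ i, gnorm d γ (fun ξ => w i ξ - v i ξ) ≤ D) :
    ∀ J : List ι, gnorm d γ (fun ξ => convList d (J.map w) ξ - convList d (J.map v) ξ) ≤
      J.length * x ^ (J.length - 1) * D
  | [] => by simp [convList, gnorm]
  | [i] => by simpa [convList] using hD i
  | i :: j :: rest => by
      set G := convList d ((j :: rest).map w)
      set G' := convList d ((j :: rest).map v)
      have hG : Measurable G := measurable_convList _ (List.forall_mem_map.2 fun i _ => hw i)
      have hG' : Measurable G' := measurable_convList _ (List.forall_mem_map.2 fun i _ => hv i)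
      have hGx : gnorm d γ G ≤ x ^ (j :: rest).length := by
        simpa only [List.length_map] using gnorm_convList_le hγ x _
          (List.forall_mem_map.2 fun i _ => hw i) (List.forall_mem_map.2 fun i _ => hwx i)
      have hG'x : gnorm d γ G' ≤ x ^ (j :: rest).length := by
        simpa only [List.length_map] using gnorm_convList_le hγ x _
          (List.forall_mem_map.2 fun i _ => hv i) (List.forall_mem_map.2 fun i _ => hvx i)
      have hxpow : x ^ (j :: rest).length ≠ ⊤ := ENNReal.pow_ne_top hx
      calc gnorm d γ (fun ξ => convE d (w i) G ξ - convE d (v i) G' ξ)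
          ≤ gnorm d γ (fun ξ => w i ξ - v i ξ) * gnorm d γ G +
              gnorm d γ (v i) * gnorm d γ (fun ξ => G ξ - G' ξ) :=
            gnorm_convE_sub_convE_le hγ (hw i) (hv i) hG hG' (ne_top_of_le_ne_top hx (hwx i))
              (ne_top_of_le_ne_top hx (hvx i)) (ne_top_of_le_ne_top hxpow hGx)
              (ne_top_of_le_ne_top hxpow hG'x)
        _ ≤ D * x ^ (j :: rest).length +
              x * ((j :: rest).length * x ^ ((j :: rest).length - 1) * D) := by
            gcongr
            · exact hD i
            · exact hvx i
            · exact gnorm_convList_map_sub_le hγ hw hv hx hwx hvx hD (j :: rest)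
        _ = ((i :: j :: rest).length : ℝ≥0∞) * x ^ ((i :: j :: rest).length - 1) * D := by
            simp only [List.length_cons, Nat.add_sub_cancel]
            push_cast
            ring

theorem multiConv_eq_convList_map {n : ℕ} (w : Fin n → EuclideanSpace ℝ (Fin d) → ℂ)
    (k : Fin n → ℕ) :
    multiConv d n w k =
      convList d (((List.ofFn fun i => List.replicate (k i) i).flatten).map w) := by
  simp only [multiConv, List.map_flatten, List.map_ofFn, Function.comp_def, List.map_replicate]

theorem gnorm_multiConv_sub_le {n : ℕ} (hγ : 0 ≤ γ)
    {w v : Fin n → EuclideanSpace ℝ (Fin d) → ℂ} (hw : ∀ i, Measurable (w i))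
    (hv : ∀ i, Measurable (v i)) {x D : ℝ≥0∞} (hx : x ≠ ⊤) (hwx : ∀ i, gnorm d γ (w i) ≤ x)
    (hvx : ∀ i, gnorm d γ (v i) ≤ x) (hD : ∀ i, gnorm d γ (fun ξ => w i ξ - v i ξ) ≤ D)
    (k : Fin n → ℕ) :
    gnorm d γ (fun ξ => multiConv d n w k ξ - multiConv d n v k ξ) ≤
      (∑ i, k i : ℕ) * x ^ ((∑ i, k i) - 1) * D := by
  have hlen : ((List.ofFn fun i => List.replicate (k i) i).flatten).length = ∑ i, k i := by
    simp [List.sum_ofFn]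
  rw [multiConv_eq_convList_map, multiConv_eq_convList_map, ← hlen]
  exact gnorm_convList_map_sub_le hγ hw hv hx hwx hvx hD _

end GevreyNorm

theorem FM'_mul_le_FM (n : ℕ) (a : (Fin n → ℕ) → ℂ) {R r : ℝ}
    (h : ENNReal.ofReal R ≤ ENNReal.ofReal r) :
    FM' n a R * (ENNReal.ofReal r - ENNReal.ofReal R) ≤ FM n a r := by
  rw [FM', FM, ← ENNReal.tsum_mul_right]
  refine ENNReal.tsum_le_tsum fun k => ?_
  rw [mul_assoc, mul_assoc]
  gcongr ENNReal.ofReal ‖a k‖ * ?_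
  calc ((∑ i, k i : ℕ) : ℝ≥0∞) * (ENNReal.ofReal R ^ ((∑ i, k i) - 1) *
        (ENNReal.ofReal r - ENNReal.ofReal R))
      ≤ ENNReal.ofReal R ^ (∑ i, k i) + (∑ i, k i : ℕ) * ENNReal.ofReal R ^ ((∑ i, k i) - 1) *
          (ENNReal.ofReal r - ENNReal.ofReal R) := by
        rw [← mul_assoc]
        exact le_add_self
    _ ≤ (ENNReal.ofReal R + (ENNReal.ofReal r - ENNReal.ofReal R)) ^ (∑ i, k i) :=
        pow_add_mul_le_add_pow zero_le zero_le _
    _ = ENNReal.ofReal r ^ (∑ i, k i) := by rw [add_tsub_cancel_of_le h]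

theorem FM'_lt_top {n : ℕ} {a : (Fin n → ℕ) → ℂ} {R : ℝ} (hR : ENNReal.ofReal R < RM n a) :
    FM' n a R < ⊤ := by
  obtain ⟨⟨r, _, hr⟩, hRr⟩ := lt_iSup_iff.mp hR
  exact ENNReal.lt_top_of_mul_ne_top_left ((FM'_mul_le_FM n a hRr.le).trans_lt hr).ne
    (tsub_pos_of_lt hRr).ne'

theorem stmt6_general (d n : ℕ) (γ : ℝ) (hγ : 0 ≤ γ)
    (a : (Fin n → ℕ) → ℂ)
    (R : ℝ) (hRM : ENNReal.ofReal R < RM n a)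
    (w v : Fin n → EuclideanSpace ℝ (Fin d) → ℂ)
    (hw : ∀ i, Measurable (w i)) (hv : ∀ i, Measurable (v i))
    (hwn : ∀ i, gnorm d γ (w i) ≤ ENNReal.ofReal R)
    (hvn : ∀ i, gnorm d γ (v i) ≤ ENNReal.ofReal R) :
    (∑' k : {k : Fin n → ℕ // k ≠ 0},
        ENNReal.ofReal ‖a k.1‖ *
          gnorm d γ (fun ξ => multiConv d n w k.1 ξ - multiConv d n v k.1 ξ))
      ≤ FM' n a R * (⨆ i : Fin n, gnorm d γ (fun ξ => w i ξ - v i ξ)) ∧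
    FM' n a R < ⊤ := by
  refine ⟨?_, FM'_lt_top hRM⟩
  have hD (i : Fin n) : gnorm d γ (fun ξ => w i ξ - v i ξ) ≤
      ⨆ i : Fin n, gnorm d γ (fun ξ => w i ξ - v i ξ) :=
    le_iSup (fun i => gnorm d γ (fun ξ => w i ξ - v i ξ)) i
  calc _ ≤ ∑' k : Fin n → ℕ, ENNReal.ofReal ‖a k‖ *
          gnorm d γ (fun ξ => multiConv d n w k ξ - multiConv d n v k ξ) :=
        ENNReal.tsum_comp_le_tsum_of_injective Subtype.val_injective _
    _ ≤ ∑' k : Fin n → ℕ, ENNReal.ofReal ‖a k‖ * (∑ i, k i : ℕ) *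
          ENNReal.ofReal R ^ ((∑ i, k i) - 1) * ⨆ i, gnorm d γ (fun ξ => w i ξ - v i ξ) :=
        ENNReal.tsum_le_tsum fun k =>
          (mul_le_mul_right
            (gnorm_multiConv_sub_le hγ hw hv ENNReal.ofReal_ne_top hwn hvn hD k) _).trans_eq
            (by ring)
    _ = _ := by rw [ENNReal.tsum_mul_right, FM']

/-- second part of Lemma 4.8: with `a(0) = 0`, `0 ≤ R < R_M` and
`‖w_i‖_γ ≤ R`, `‖v_i‖_γ ≤ R` for each `i`,
`∑_{k ≠ 0} |a_k| ‖w₁^{*k₁}*⋯*w_n^{*k_n} − v₁^{*k₁}*⋯*v_n^{*k_n}‖_γ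
  ≤ F_M′(R) · max_i ‖w_i − v_i‖_γ`, with `F_M′(R) < ∞`. -/
theorem stmt6 (d n : ℕ) (hd : 1 ≤ d) (hn : 1 ≤ n) (γ : ℝ) (hγ : 0 ≤ γ)
    (a : (Fin n → ℕ) → ℂ) (ha0 : a 0 = 0)
    (R : ℝ) (hR : 0 ≤ R) (hRM : ENNReal.ofReal R < RM n a)
    (w v : Fin n → EuclideanSpace ℝ (Fin d) → ℂ)
    (hw : ∀ i, Measurable (w i)) (hv : ∀ i, Measurable (v i))
    (hwn : ∀ i, gnorm d γ (w i) ≤ ENNReal.ofReal R)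
    (hvn : ∀ i, gnorm d γ (v i) ≤ ENNReal.ofReal R) :
    (∑' k : {k : Fin n → ℕ // k ≠ 0},
        ENNReal.ofReal ‖a k.1‖ *
          gnorm d γ (fun ξ => multiConv d n w k.1 ξ - multiConv d n v k.1 ξ))
      ≤ FM' n a R * (⨆ i : Fin n, gnorm d γ (fun ξ => w i ξ - v i ξ)) ∧
    FM' n a R < ⊤ :=
  stmt6_general d n γ hγ a R hRM w v hw hv hwn hvn
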